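/- Let (V₁,V₂;A) be a bipartite graph with no pair of twins in V₁ (with respect to V₂). Let V₂ = C₁ ∪ C₂ be a partition. Then for at least one i ∈ {1,2}, the bipartite graph (V₁, C_i; A ∩ (V₁ × C_i)) has no twin class in V₁ of size ≥ |V₁|/2 + 1. -/

import Mathlib

/-!
A twin class of `x₁` with respect to `C₁` and one of `x₂` with respect to `C₂` share at most
one vertex, since two common members would agree on all of `C₁ ∪ C₂ = V₂` and hence be twins.
So their sizes add up to at most `|V₁| + 1`, and they cannot both reach `|V₁|/2 + 1`.
-/

open Set

theorem Set.ncard_add_ncard_le_of_subsingleton_inter {α : Type*} [Finite α] {s t : Set α}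
    (h : (s ∩ t).Subsingleton) : s.ncard + t.ncard ≤ Nat.card α + 1 := by
  rw [← ncard_union_add_ncard_inter s t, ← ncard_univ]
  exact add_le_add (ncard_le_ncard (subset_univ _)) (ncard_le_one_iff_subsingleton.mpr h)

section TwinClass

variable {V₁ V₂ : Type*}

def twinClass (A : V₁ → V₂ → Prop) (C : Set V₂) (x : V₁) : Set V₁ :=
  {x' | ∀ z ∈ C, (A x' z ↔ A x z)}

theorem twinClass_inter_subsingleton {A : V₁ → V₂ → Prop}
    (hnotwins : ∀ x y : V₁, (∀ z, A x z ↔ A y z) → x = y)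
    {C₁ C₂ : Set V₂} (hunion : C₁ ∪ C₂ = univ) (x₁ x₂ : V₁) :
    (twinClass A C₁ x₁ ∩ twinClass A C₂ x₂).Subsingleton := by
  rintro a ⟨ha₁, ha₂⟩ b ⟨hb₁, hb₂⟩
  refine hnotwins a b fun z => ?_
  rcases (hunion.symm ▸ mem_univ z : z ∈ C₁ ∪ C₂) with hz | hz
  · exact (ha₁ z hz).trans (hb₁ z hz).symm
  · exact (ha₂ z hz).trans (hb₂ z hz).symm

end TwinClass

theorem stmt_8_general {V₁ V₂ : Type*} [Fintype V₁]
    (A : V₁ → V₂ → Prop)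
    (hnotwins : ∀ x y : V₁, (∀ z, A x z ↔ A y z) → x = y)
    (C₁ C₂ : Set V₂) (hunion : C₁ ∪ C₂ = Set.univ) :
    (∀ x : V₁,
      2 * Nat.card {x' : V₁ // ∀ z ∈ C₁, (A x' z ↔ A x z)} < Fintype.card V₁ + 2) ∨
    (∀ x : V₁,
      2 * Nat.card {x' : V₁ // ∀ z ∈ C₂, (A x' z ↔ A x z)} < Fintype.card V₁ + 2) := by
  by_contra! h
  obtain ⟨⟨x₁, h₁⟩, ⟨x₂, h₂⟩⟩ := h
  have hsum := ncard_add_ncard_le_of_subsingleton_inter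
    (twinClass_inter_subsingleton hnotwins hunion x₁ x₂)
  rw [Nat.card_eq_fintype_card] at hsum
  change Fintype.card V₁ + 2 ≤ 2 * Nat.card (twinClass A C₁ x₁) at h₁
  change Fintype.card V₁ + 2 ≤ 2 * Nat.card (twinClass A C₂ x₂) at h₂
  rw [Nat.card_coe_set_eq] at h₁ h₂
  omega

/-- If `(V₁,V₂;A)` has no twins in `V₁` and `V₂ = C₁ ⊔ C₂`, then for at least
one `i`, the graph `(V₁, C_i; A)` has no twin class in `V₁` of size
`≥ |V₁|/2 + 1`. -/
theorem stmt_8 {V₁ V₂ : Type*} [Fintype V₁] [Fintype V₂]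
    (A : V₁ → V₂ → Prop)
    (hnotwins : ∀ x y : V₁, (∀ z, A x z ↔ A y z) → x = y)
    (C₁ C₂ : Set V₂) (hdisj : Disjoint C₁ C₂) (hunion : C₁ ∪ C₂ = Set.univ) :
    (∀ x : V₁,
      2 * Nat.card {x' : V₁ // ∀ z ∈ C₁, (A x' z ↔ A x z)} < Fintype.card V₁ + 2) ∨
    (∀ x : V₁,
      2 * Nat.card {x' : V₁ // ∀ z ∈ C₂, (A x' z ↔ A x z)} < Fintype.card V₁ + 2) :=
  stmt_8_general A hnotwins C₁ C₂ hunion
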